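/- arXiv:1305.6858 — 17 statements merged into one kernel-verified Lean document; each statement's English description precedes it below -/
import Mathlib

section
/- Every AG**-groupoid is paramedial: for all elements a, b, c, d, one has (ab)(cd) = (db)(ca). -/
/-- Every AG**-groupoid is paramedial. -/
theorem paramedial {G : Type*} [Mul G]
    (hAG : ∀ x y z : G, x * y * z = z * y * x)
    (hss : ∀ x y z : G, x * (y * z) = y * (x * z)) :
    ∀ a b c d : G, (a * b) * (c * d) = (d * b) * (c * a) := by
  intro a b c d
  rw [hss, hAG a b d, hss]
end

section
/- In any AG**-groupoid, any two idempotents commute: if e·e = e and f·f = f, then ef = fe. Hence the set of idempotents, if nonempty, forms a semilattice under the induced multiplication. -/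
/-- In any AG**-groupoid, any two idempotents commute; hence the set of
idempotents (if nonempty) forms a semilattice under the induced multiplication:
it is closed under multiplication, and the multiplication restricted to
idempotents is commutative and associative. -/
theorem idempotents_semilattice {G : Type*} [Mul G]
    (hAG : ∀ x y z : G, x * y * z = z * y * x)
    (hss : ∀ x y z : G, x * (y * z) = y * (x * z)) :
    (∀ e f : G, e * e = e → f * f = f → e * f = f * e) ∧
    (∀ e f : G, e * e = e → f * f = f → (e * f) * (e * f) = e * f) ∧
    (∀ e f g : G, e * e = e → f * f = f → g * g = g →
      (e * f) * g = e * (f * g)) := by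
  have medial : ∀ a b c d : G, (a * b) * (c * d) = (d * b) * (c * a) := by
    intro a b c d
    calc (a * b) * (c * d) = c * ((a * b) * d) := hss _ _ _
      _ = c * ((d * b) * a) := by rw [hAG a b d]
      _ = (d * b) * (c * a) := hss _ _ _
  have comm : ∀ e f : G, e * e = e → f * f = f → e * f = f * e := by
    intro e f he hf
    calc e * f = (e * e) * f := by rw [he]
      _ = (f * e) * e := hAG _ _ _
      _ = ((f * f) * e) * e := by rw [hf]
      _ = ((e * f) * f) * e := by rw [hAG f f e]
      _ = (e * f) * (e * f) := by rw [hAG (e*f) f e, hAG e f (e*f)]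
      _ = (f * f) * (e * e) := medial _ _ _ _
      _ = f * e := by rw [he, hf]
  have clos : ∀ e f : G, e * e = e → f * f = f → (e * f) * (e * f) = e * f := by
    intro e f he hf
    calc (e * f) * (e * f) = (f * f) * (e * e) := medial _ _ _ _
      _ = f * e := by rw [he, hf]
      _ = e * f := (comm e f he hf).symm
  refine ⟨comm, clos, ?_⟩
  intro e f g he hf hg
  calc (e * f) * g = g * (e * f) := comm _ _ (clos e f he hf) hg ▸ comm (e*f) g (clos e f he hf) hg
    _ = e * (g * f) := hss _ _ _
    _ = e * (f * g) := by rw [comm f g hf hg]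
end

section
/- In any AG**-groupoid, for every idempotent e and all elements a, b, one has e(ab) = (ea)b. -/
/-- In any AG**-groupoid, for every idempotent `e` and all `a b`,
`e*(a*b) = (e*a)*b`. -/
theorem idempotent_assoc {G : Type*} [Mul G]
    (hAG : ∀ x y z : G, x * y * z = z * y * x)
    (hss : ∀ x y z : G, x * (y * z) = y * (x * z)) :
    ∀ e a b : G, e * e = e → e * (a * b) = (e * a) * b := by
  intro e a b he
  have h1 : e * (a * b) = (e * a) * (e * b) := by
    calc e * (a * b) = (e * e) * (a * b) := by rw [he]
      _ = ((a * b) * e) * e := by rw [hAG]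
      _ = ((e * b) * a) * e := by rw [hAG a b e]
      _ = (e * a) * (e * b) := by rw [hAG (e*b) a e]
  have h2 : (e * a) * b = (e * a) * (e * b) := by
    calc (e * a) * b = (b * a) * e := by rw [hAG]
      _ = (b * a) * (e * e) := by rw [he]
      _ = e * ((b * a) * e) := by rw [hss]
      _ = e * ((e * a) * b) := by rw [hAG b a e]
      _ = (e * a) * (e * b) := by rw [hss]
  rw [h1, h2]
end

section
/- In an AG-group with left identity e, the left inverse of each element is unique, and every left inverse is also a right inverse: if a'a = e and a''a = e then a' = a'', and a'a = e implies aa' = e. -/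
/-- In an AG-group with left identity `e`, left inverses are unique and
every left inverse is also a right inverse. -/
theorem AGgroup_inverse_unique {G : Type*} [Mul G]
    (hAG : ∀ x y z : G, x * y * z = z * y * x)
    (e : G) (he : ∀ x : G, e * x = x)
    (hinv : ∀ a : G, ∃ a' : G, a' * a = e) :
    (∀ a a' a'' : G, a' * a = e → a'' * a = e → a' = a'') ∧
    (∀ a a' : G, a' * a = e → a * a' = e) := by
  constructor
  · intro a a' a'' h1 h2
    calc a' = e * a' := (he a').symm
      _ = (a'' * a) * a' := by rw [h2]
      _ = (a' * a) * a'' := hAG a'' a a'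
      _ = e * a'' := by rw [h1]
      _ = a'' := he a''
  · intro a a' h
    calc a * a' = (e * a) * a' := by rw [he]
      _ = (a' * a) * e := hAG e a a'
      _ = e := by rw [h, he]
end

section
/- In any AG**-groupoid, if x is an inverse of a and y is an inverse of b, then xy is an inverse of ab; that is, ab = ((ab)(xy))(ab) and xy = ((xy)(ab))(xy). -/
/-- In any AG**-groupoid, if `x` is an inverse of `a` and `y` is an inverse of
`b`, then `x*y` is an inverse of `a*b`. -/
theorem inverse_of_product {G : Type*} [Mul G]
    (hAG : ∀ x y z : G, x * y * z = z * y * x)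
    (hss : ∀ x y z : G, x * (y * z) = y * (x * z))
    (a b x y : G)
    (hxa : a = (a * x) * a) (hax : x = (x * a) * x)
    (hyb : b = (b * y) * b) (hby : y = (y * b) * y) :
    a * b = ((a * b) * (x * y)) * (a * b) ∧
    x * y = ((x * y) * (a * b)) * (x * y) := by
  have med : ∀ p q r s : G, (p * q) * (r * s) = (p * r) * (q * s) := by
    intro p q r s
    rw [hAG p q (r * s), hAG r s q, hAG (q * s) r p]
  constructor
  · calc a * b = ((a * x) * a) * ((b * y) * b) := by rw [← hxa, ← hyb]
      _ = ((a * x) * (b * y)) * (a * b) := med _ _ _ _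
      _ = ((a * b) * (x * y)) * (a * b) := by rw [med a b x y]
  · calc x * y = ((x * a) * x) * ((y * b) * y) := by rw [← hax, ← hby]
      _ = ((x * a) * (y * b)) * (x * y) := med _ _ _ _
      _ = ((x * y) * (a * b)) * (x * y) := by rw [med x y a b]
end

section
/- In a completely inverse AG**-groupoid A, for every element a one has aA = Aa, i.e., {ab : b ∈ A} = {ba : b ∈ A}. -/
/-- `rset a` is the set `aA = {a*b : b ∈ A}`. -/
def rset {G : Type*} [Mul G] (a : G) : Set G := {x | ∃ b, x = a * b}

/-- `lset a` is the set `Aa = {b*a : b ∈ A}`. -/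
def lset {G : Type*} [Mul G] (a : G) : Set G := {x | ∃ b, x = b * a}

/-- In a completely inverse AG**-groupoid, `aA = Aa` for every `a`. -/
theorem rset_eq_lset {G : Type*} [Mul G] [Inv G]
    (hAG : ∀ x y z : G, x * y * z = z * y * x)
    (hss : ∀ x y z : G, x * (y * z) = y * (x * z))
    (hinv₁ : ∀ a : G, a = a * a⁻¹ * a)
    (hinv₂ : ∀ a : G, a⁻¹ = a⁻¹ * a * a⁻¹)
    (hcomm : ∀ a : G, a * a⁻¹ = a⁻¹ * a) :
    ∀ a : G, rset a = lset a := by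
  intro a
  ext x
  constructor
  · rintro ⟨b, rfl⟩
    refine ⟨a⁻¹ * b * a, ?_⟩
    calc a * b = a * a⁻¹ * a * b := by rw [← hinv₁]
      _ = b * a * (a * a⁻¹) := hAG _ _ _
      _ = b * a * (a⁻¹ * a) := by rw [hcomm]
      _ = a⁻¹ * (b * a * a) := hss _ _ _
      _ = a⁻¹ * (a * a * b) := by rw [hAG b a a]
      _ = a * a * (a⁻¹ * b) := hss _ _ _
      _ = a⁻¹ * b * a * a := hAG _ _ _
  · rintro ⟨b, rfl⟩
    refine ⟨a * b * a⁻¹, ?_⟩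
    calc b * a = b * (a * a⁻¹ * a) := by rw [← hinv₁]
      _ = a * a⁻¹ * (b * a) := hss _ _ _
      _ = b * a * a⁻¹ * a := (hAG _ _ _).symm
      _ = a⁻¹ * a * b * a := by rw [hAG b a a⁻¹]
      _ = a * b * (a⁻¹ * a) := hAG _ _ _
      _ = a * b * (a * a⁻¹) := by rw [← hcomm]
      _ = a * (a * b * a⁻¹) := hss _ _ _
end

section
/- In a completely inverse AG**-groupoid A, for every element a the set aA is a two-sided ideal of A containing a, and it is the least such: it is contained in every left ideal containing a, in every right ideal containing a, and in every two-sided ideal containing a. In particular L(a) = R(a) = J(a) = aA. -/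
/-- A left ideal: a nonempty subset `B` with `AB ⊆ B`. -/
def IsLeftIdeal {G : Type*} [Mul G] (B : Set G) : Prop :=
  B.Nonempty ∧ ∀ x : G, ∀ b ∈ B, x * b ∈ B

/-- A right ideal: a nonempty subset `B` with `BA ⊆ B`. -/
def IsRightIdeal {G : Type*} [Mul G] (B : Set G) : Prop :=
  B.Nonempty ∧ ∀ x : G, ∀ b ∈ B, b * x ∈ B

/-- In a completely inverse AG**-groupoid, `aA` is a two-sided ideal
containing `a`, and it is the least left ideal, the least right ideal and the
least two-sided ideal containing `a`; that is, `L(a) = R(a) = J(a) = aA`. -/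
theorem rset_least_ideal {G : Type*} [Mul G] [Inv G]
    (hAG : ∀ x y z : G, x * y * z = z * y * x)
    (hss : ∀ x y z : G, x * (y * z) = y * (x * z))
    (hinv₁ : ∀ a : G, a = a * a⁻¹ * a)
    (hinv₂ : ∀ a : G, a⁻¹ = a⁻¹ * a * a⁻¹)
    (hcomm : ∀ a : G, a * a⁻¹ = a⁻¹ * a) :
    ∀ a : G,
      a ∈ rset a ∧
      IsLeftIdeal (rset a) ∧ IsRightIdeal (rset a) ∧
      (∀ L : Set G, IsLeftIdeal L → a ∈ L → rset a ⊆ L) ∧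
      (∀ R : Set G, IsRightIdeal R → a ∈ R → rset a ⊆ R) ∧
      (∀ I : Set G, IsLeftIdeal I → IsRightIdeal I → a ∈ I → rset a ⊆ I) := by
  -- medial law
  have hM : ∀ x y z w : G, (x * y) * (z * w) = (x * z) * (y * w) := by
    intro x y z w
    calc (x * y) * (z * w) = ((z * w) * y) * x := hAG x y (z * w)
      _ = ((y * w) * z) * x := by rw [hAG z w y]
      _ = (x * z) * (y * w) := hAG (y * w) z x
  -- paramedial-type law
  have hP : ∀ x y z w : G, (x * y) * (z * w) = (w * y) * (z * x) := by
    intro x y z w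
    calc (x * y) * (z * w) = z * ((x * y) * w) := hss (x*y) z w
      _ = z * ((w * y) * x) := by rw [hAG x y w]
      _ = (w * y) * (z * x) := hss z (w*y) x
  intro a
  -- a ∈ aA
  have hmem : a ∈ rset a := by
    refine ⟨(a * (a * a⁻¹)) * a⁻¹, ?_⟩
    calc a = (a * a⁻¹) * a := hinv₁ a
      _ = (a * a⁻¹) * ((a * a⁻¹) * a) := by rw [← hinv₁ a]; exact hinv₁ a
      _ = (a * (a * a⁻¹)) * (a⁻¹ * a) := hM a a⁻¹ (a*a⁻¹) a
      _ = (a * (a * a⁻¹)) * (a * a⁻¹) := by rw [hcomm a]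
      _ = a * ((a * (a * a⁻¹)) * a⁻¹) := hss (a*(a*a⁻¹)) a a⁻¹
  refine ⟨hmem, ?_, ?_, ?_, ?_, ?_⟩
  · -- left ideal
    refine ⟨⟨a, hmem⟩, ?_⟩
    rintro x _ ⟨b, rfl⟩
    exact ⟨x * b, hss x a b⟩
  · -- right ideal
    refine ⟨⟨a, hmem⟩, ?_⟩
    rintro x _ ⟨b, rfl⟩
    refine ⟨(a⁻¹ * (x * b)) * a, ?_⟩
    calc (a * b) * x = (x * b) * a := hAG a b x
      _ = (x * b) * ((a * a⁻¹) * a) := by rw [← hinv₁ a]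
      _ = (a * a⁻¹) * ((x * b) * a) := hss (x*b) (a*a⁻¹) a
      _ = (a⁻¹ * a) * ((x * b) * a) := by rw [hcomm a]
      _ = (a⁻¹ * (x * b)) * (a * a) := hM a⁻¹ a (x*b) a
      _ = a * ((a⁻¹ * (x * b)) * a) := hss (a⁻¹*(x*b)) a a
  · -- least left ideal
    rintro L ⟨_, hL⟩ haL x ⟨b, rfl⟩
    have key : a * b = a⁻¹ * ((b * a) * a) := by
      calc a * b = ((a * a⁻¹) * a) * b := by rw [← hinv₁ a]
        _ = (b * a) * (a * a⁻¹) := hAG (a*a⁻¹) a b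
        _ = (a⁻¹ * a) * (a * b) := hP b a a a⁻¹
        _ = (a * a⁻¹) * (a * b) := by rw [hcomm a]
        _ = (a * a) * (a⁻¹ * b) := hM a a⁻¹ a b
        _ = a⁻¹ * ((a * a) * b) := hss (a*a) a⁻¹ b
        _ = a⁻¹ * ((b * a) * a) := by rw [hAG a a b]
    rw [key]
    exact hL a⁻¹ _ (hL (b*a) a haL)
  · -- least right ideal
    rintro R ⟨_, hR⟩ haR x ⟨b, rfl⟩
    exact hR b a haR
  · -- least two-sided ideal
    rintro I ⟨_, hI⟩ _ haI x ⟨b, rfl⟩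
    have key : a * b = a⁻¹ * ((b * a) * a) := by
      calc a * b = ((a * a⁻¹) * a) * b := by rw [← hinv₁ a]
        _ = (b * a) * (a * a⁻¹) := hAG (a*a⁻¹) a b
        _ = (a⁻¹ * a) * (a * b) := hP b a a a⁻¹
        _ = (a * a⁻¹) * (a * b) := by rw [hcomm a]
        _ = (a * a) * (a⁻¹ * b) := hM a a⁻¹ a b
        _ = a⁻¹ * ((a * a) * b) := hss (a*a) a⁻¹ b
        _ = a⁻¹ * ((b * a) * a) := by rw [hAG a a b]
    rw [key]
    exact hI a⁻¹ _ (hI (b*a) a haI)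
end

section
/- In a completely inverse AG**-groupoid A, for every element a one has aA = (aa⁻¹)A, i.e., {ab : b ∈ A} = {(aa⁻¹)b : b ∈ A}. -/
/-- In a completely inverse AG**-groupoid, `aA = (aa⁻¹)A` for every `a`. -/
theorem rset_eq_rset_idem {G : Type*} [Mul G] [Inv G]
    (hAG : ∀ x y z : G, x * y * z = z * y * x)
    (hss : ∀ x y z : G, x * (y * z) = y * (x * z))
    (hinv₁ : ∀ a : G, a = a * a⁻¹ * a)
    (hinv₂ : ∀ a : G, a⁻¹ = a⁻¹ * a * a⁻¹)
    (hcomm : ∀ a : G, a * a⁻¹ = a⁻¹ * a) :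
    ∀ a : G, rset a = rset (a * a⁻¹) := by
  intro a
  ext x
  constructor
  · rintro ⟨b, rfl⟩
    refine ⟨a * b, ?_⟩
    calc a * b = (a * a⁻¹ * a) * b := by rw [← hinv₁]
      _ = (b * a) * (a * a⁻¹) := hAG _ _ _
      _ = a * ((b * a) * a⁻¹) := hss _ _ _
      _ = a * ((a⁻¹ * a) * b) := by rw [hAG (b) a a⁻¹]
      _ = a * ((a * a⁻¹) * b) := by rw [← hcomm]
      _ = (a * a⁻¹) * (a * b) := hss _ _ _
  · rintro ⟨c, rfl⟩
    refine ⟨(c * (a * a⁻¹)) * a⁻¹, ?_⟩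
    calc (a * a⁻¹) * c = ((a * a⁻¹ * a) * a⁻¹) * c := by rw [← hinv₁]
      _ = ((a⁻¹ * a) * (a * a⁻¹)) * c := by rw [hAG (a*a⁻¹) a a⁻¹]
      _ = (c * (a * a⁻¹)) * (a⁻¹ * a) := hAG _ _ _
      _ = (c * (a * a⁻¹)) * (a * a⁻¹) := by rw [← hcomm]
      _ = a * ((c * (a * a⁻¹)) * a⁻¹) := hss _ _ _
end

section
/- In a completely inverse AG**-groupoid A, for every element a one has aA = a⁻¹A, i.e., {ab : b ∈ A} = {a⁻¹b : b ∈ A}. -/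
/-- In a completely inverse AG**-groupoid, `aA = a⁻¹A` for every `a`. -/
theorem rset_eq_rset_inv {G : Type*} [Mul G] [Inv G]
    (hAG : ∀ x y z : G, x * y * z = z * y * x)
    (hss : ∀ x y z : G, x * (y * z) = y * (x * z))
    (hinv₁ : ∀ a : G, a = a * a⁻¹ * a)
    (hinv₂ : ∀ a : G, a⁻¹ = a⁻¹ * a * a⁻¹)
    (hcomm : ∀ a : G, a * a⁻¹ = a⁻¹ * a) :
    ∀ a : G, rset a = rset a⁻¹ := by
  intro a
  ext x
  constructor
  · rintro ⟨b, rfl⟩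
    refine ⟨b * a * a, ?_⟩
    calc a * b = a * a⁻¹ * a * b := by rw [← hinv₁]
      _ = b * a * (a * a⁻¹) := hAG _ _ _
      _ = b * a * (a⁻¹ * a) := by rw [hcomm]
      _ = a⁻¹ * (b * a * a) := hss _ _ _
  · rintro ⟨b, rfl⟩
    refine ⟨b * a⁻¹ * a⁻¹, ?_⟩
    calc a⁻¹ * b = a⁻¹ * a * a⁻¹ * b := by rw [← hinv₂]
      _ = b * a⁻¹ * (a⁻¹ * a) := hAG _ _ _
      _ = b * a⁻¹ * (a * a⁻¹) := by rw [hcomm]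
      _ = a * (b * a⁻¹ * a⁻¹) := hss _ _ _
end

section
/- In a completely inverse AG**-groupoid A, if e and f are idempotents with eA = fA, then e = f. -/
/-- In a completely inverse AG**-groupoid, if `e, f` are idempotents with
`eA = fA`, then `e = f`. -/
theorem idem_rset_inj {G : Type*} [Mul G] [Inv G]
    (hAG : ∀ x y z : G, x * y * z = z * y * x)
    (hss : ∀ x y z : G, x * (y * z) = y * (x * z))
    (hinv₁ : ∀ a : G, a = a * a⁻¹ * a)
    (hinv₂ : ∀ a : G, a⁻¹ = a⁻¹ * a * a⁻¹)
    (hcomm : ∀ a : G, a * a⁻¹ = a⁻¹ * a) :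
    ∀ e f : G, e * e = e → f * f = f → rset e = rset f → e = f := by
  intro e f he hf hset
  -- key lemma: if g*g = g and a = g*x then g*a = a
  have key : ∀ g a x : G, g * g = g → a = g * x → g * a = a := by
    intro g a x hg ha
    calc g * a = g * (g * g * x) := by rw [hg, ← ha]
      _ = g * (x * g * g) := by rw [hAG g g x]
      _ = x * g * (g * g) := hss g (x * g) g
      _ = x * g * g := by rw [hg]
      _ = g * g * x := hAG x g g
      _ = a := by rw [hg, ← ha]
  have hef : e ∈ rset f := by
    rw [← hset]; exact ⟨e, he.symm⟩
  have hfe : f ∈ rset e := by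
    rw [hset]; exact ⟨f, hf.symm⟩
  obtain ⟨x, hx⟩ := hef
  obtain ⟨y, hy⟩ := hfe
  have h1 : f * e = e := key f e x hf hx
  have h2 : e * f = f := key e f y he hy
  calc e = e * e := he.symm
    _ = f * e * e := by rw [h1]
    _ = e * e * f := hAG f e e
    _ = e * f := by rw [he]
    _ = f := h2
end

section
/- In a completely inverse AG**-groupoid A, every left ideal of A is a right ideal of A and vice versa; moreover, for every ideal L and every ideal R, one has L ∩ R = LR, where LR = {lr : l ∈ L, r ∈ R}. -/
/-- In a completely inverse AG**-groupoid, every left ideal is a right ideal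
and vice versa; moreover, for all ideals `L` and `R`, `L ∩ R = LR`. -/
theorem ideals_coincide {G : Type*} [Mul G] [Inv G]
    (hAG : ∀ x y z : G, x * y * z = z * y * x)
    (hss : ∀ x y z : G, x * (y * z) = y * (x * z))
    (hinv₁ : ∀ a : G, a = a * a⁻¹ * a)
    (hinv₂ : ∀ a : G, a⁻¹ = a⁻¹ * a * a⁻¹)
    (hcomm : ∀ a : G, a * a⁻¹ = a⁻¹ * a) :
    (∀ B : Set G, IsLeftIdeal B → IsRightIdeal B) ∧
    (∀ B : Set G, IsRightIdeal B → IsLeftIdeal B) ∧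
    (∀ L R : Set G, IsLeftIdeal L → IsRightIdeal L →
      IsLeftIdeal R → IsRightIdeal R →
      L ∩ R = {x : G | ∃ l ∈ L, ∃ r ∈ R, x = l * r}) := by
  refine ⟨?_, ?_, ?_⟩
  · rintro B ⟨hne, hL⟩
    refine ⟨hne, fun x b hb => ?_⟩
    have key : b * x = b⁻¹ * x * b * b := by
      calc b * x = b * b⁻¹ * b * x := by rw [← hinv₁]
        _ = x * b * (b * b⁻¹) := hAG _ _ _
        _ = x * b * (b⁻¹ * b) := by rw [hcomm]
        _ = b⁻¹ * (x * b * b) := hss _ _ _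
        _ = b⁻¹ * (b * b * x) := by rw [hAG x b b]
        _ = b * b * (b⁻¹ * x) := hss _ _ _
        _ = b⁻¹ * x * b * b := (hAG _ _ _).symm
    rw [key]
    exact hL _ _ hb
  · rintro B ⟨hne, hR⟩
    refine ⟨hne, fun x b hb => ?_⟩
    have key : x * b = b * (b⁻¹ * x * b) := by
      calc x * b = x * (b * b⁻¹ * b) := by rw [← hinv₁]
        _ = x * (b⁻¹ * b * b) := by rw [hcomm]
        _ = b⁻¹ * b * (x * b) := hss _ _ _
        _ = x * b * b * b⁻¹ := (hAG _ _ _).symm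
        _ = b * b * x * b⁻¹ := by rw [hAG x b b]
        _ = b⁻¹ * x * (b * b) := hAG _ _ _
        _ = b * (b⁻¹ * x * b) := hss _ _ _
    rw [key]
    exact hR _ _ hb
  · rintro L R ⟨_, hLl⟩ ⟨_, hLr⟩ ⟨_, hRl⟩ ⟨_, hRr⟩
    ext x
    constructor
    · rintro ⟨hxL, hxR⟩
      exact ⟨x * x⁻¹, hLr _ _ hxL, x, hxR, hinv₁ x⟩
    · rintro ⟨l, hl, r, hr, rfl⟩
      exact ⟨hLr _ _ hl, hRl _ _ hr⟩
end

section
/- Lallement's Lemma for completely inverse AG**-groupoids: if ρ is a congruence on a completely inverse AG**-groupoid A and a ∈ A satisfies a ρ a² (i.e., the ρ-class of a is an idempotent of A/ρ), then there exists an idempotent e of A with e ρ a and eA ⊆ aA. -/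
/-- Lallement's Lemma for completely inverse AG**-groupoids: if `ρ` is a
congruence and `a ρ a²`, then some idempotent `e` satisfies `e ρ a` and
`eA ⊆ aA`. -/
theorem lallement {G : Type*} [Mul G] [Inv G]
    (hAG : ∀ x y z : G, x * y * z = z * y * x)
    (hss : ∀ x y z : G, x * (y * z) = y * (x * z))
    (hinv₁ : ∀ a : G, a = a * a⁻¹ * a)
    (hinv₂ : ∀ a : G, a⁻¹ = a⁻¹ * a * a⁻¹)
    (hcomm : ∀ a : G, a * a⁻¹ = a⁻¹ * a)
    (ρ : Con G) (a : G) (ha : ρ a (a * a)) :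
    ∃ e : G, e * e = e ∧ ρ e a ∧ rset e ⊆ rset a := by
  refine ⟨a * a⁻¹, ?_, ?_, ?_⟩
  · -- idempotency: a*a⁻¹ = a*(a⁻¹*a*a⁻¹) = (a⁻¹*a)*(a*a⁻¹) = (a*a⁻¹)*(a*a⁻¹)
    conv_rhs => rw [hinv₂ a, hss, ← hcomm]
  · -- a*a⁻¹ ρ (a*a)*a⁻¹ = (a⁻¹*a)*a = (a*a⁻¹)*a = a
    have h : ρ (a * a⁻¹) (a * a * a⁻¹) := ρ.mul ha (ρ.refl a⁻¹)
    have h2 : a * a * a⁻¹ = a := by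
      rw [hAG, ← hcomm, ← hinv₁]
    rw [h2] at h
    exact h
  · rintro x ⟨y, rfl⟩
    refine ⟨a⁻¹ * (y * a) * a⁻¹, ?_⟩
    calc a * a⁻¹ * y = a⁻¹ * a * y := by rw [hcomm]
      _ = y * a * a⁻¹ := by rw [hAG]
      _ = (a * a⁻¹) * (y * a) * a⁻¹ := by
            congr 1
            conv_lhs => rw [hinv₁ a]
            rw [hss]
      _ = a⁻¹ * (y * a) * (a * a⁻¹) := by rw [hAG]
      _ = a * (a⁻¹ * (y * a) * a⁻¹) := by rw [hss]
end

section
/- In a completely inverse AG**-groupoid A, the Green's relation H defined by a H b iff aA = bA is the least semilattice congruence on A: H is a congruence whose quotient is a semilattice (i.e., a H a² and (ab) H (ba) for all a, b), and H is contained in every semilattice congruence on A. -/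
/-- In a completely inverse AG**-groupoid, Green's relation `H`
(`a H b ↔ aA = bA`) is the least semilattice congruence. -/
theorem H_least_semilattice_congruence {G : Type*} [Mul G] [Inv G]
    (hAG : ∀ x y z : G, x * y * z = z * y * x)
    (hss : ∀ x y z : G, x * (y * z) = y * (x * z))
    (hinv₁ : ∀ a : G, a = a * a⁻¹ * a)
    (hinv₂ : ∀ a : G, a⁻¹ = a⁻¹ * a * a⁻¹)
    (hcomm : ∀ a : G, a * a⁻¹ = a⁻¹ * a) :
    ∃ H : Con G,
      (∀ a b : G, H a b ↔ rset a = rset b) ∧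
      (∀ a : G, H a (a * a)) ∧
      (∀ a b : G, H (a * b) (b * a)) ∧
      (∀ ρ : Con G, (∀ a : G, ρ a (a * a)) → (∀ a b : G, ρ (a * b) (b * a)) →
        H ≤ ρ) := by
  -- the medial law
  have med : ∀ a b c d : G, (a*b)*(c*d) = (a*c)*(b*d) := by
    intro a b c d
    calc (a*b)*(c*d) = ((c*d)*b)*a := hAG a b (c*d)
      _ = ((b*d)*c)*a := by rw [hAG c d b]
      _ = (a*c)*(b*d) := (hAG a c (b*d)).symm
  -- key characterization of rset for an "inverse pair" (u, v)
  have pair : ∀ u v : G, u = u * v * u → u * v = v * u →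
      rset u = {x | (v * u) * x = x} := by
    intro u v hu hc
    have key : ∀ w : G, w * u = u * ((u*w)*v) := by
      intro w
      calc w * u = w * ((u*v)*u) := by rw [← hu]
        _ = (u*v) * (w*u) := hss w (u*v) u
        _ = (v*u) * (w*u) := by rw [hc]
        _ = (v*w) * (u*u) := med v u w u
        _ = u * ((v*w)*u) := hss (v*w) u u
        _ = u * ((u*w)*v) := by rw [← hAG u w v]
    ext x
    simp only [rset, Set.mem_setOf_eq]
    constructor
    · rintro ⟨c, rfl⟩
      calc (v*u)*(u*c) = u*((v*u)*c) := hss (v*u) u c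
        _ = u*((c*u)*v) := by rw [hAG c u v]
        _ = (c*u)*(u*v) := hss u (c*u) v
        _ = ((u*v)*u)*c := (hAG (u*v) u c).symm
        _ = u*c := by rw [← hu]
    · intro hx
      refine ⟨(u*(x*v))*v, ?_⟩
      calc x = (v*u)*x := hx.symm
        _ = (u*v)*x := by rw [hc]
        _ = (x*v)*u := hAG u v x
        _ = u*((u*(x*v))*v) := key (x*v)
  have rchar : ∀ a : G, rset a = {x | (a⁻¹ * a) * x = x} :=
    fun a => pair a a⁻¹ (hinv₁ a) (hcomm a)
  -- idempotency of a⁻¹ * a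
  have idem : ∀ a : G, (a⁻¹*a) * (a⁻¹*a) = a⁻¹*a := by
    intro a
    have h : a⁻¹*a = (a⁻¹*a)*(a⁻¹*a) := by
      calc a⁻¹*a = a*a⁻¹ := (hcomm a).symm
        _ = a*((a⁻¹*a)*a⁻¹) := by rw [← hinv₂ a]
        _ = (a⁻¹*a)*(a*a⁻¹) := hss a (a⁻¹*a) a⁻¹
        _ = (a⁻¹*a)*(a⁻¹*a) := by rw [hcomm a]
    exact h.symm
  -- characterization of rset of a product
  have prodchar : ∀ a c : G, rset (a*c) = {x | ((a⁻¹*a)*(c⁻¹*c)) * x = x} := by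
    intro a c
    have h1 : (a*c)*(a⁻¹*c⁻¹) = (a*a⁻¹)*(c*c⁻¹) := med a c a⁻¹ c⁻¹
    have h2 : (a⁻¹*c⁻¹)*(a*c) = (a⁻¹*a)*(c⁻¹*c) := med a⁻¹ c⁻¹ a c
    have hu : a*c = (a*c)*(a⁻¹*c⁻¹)*(a*c) := by
      rw [h1]
      calc a*c = (a*a⁻¹*a)*(c*c⁻¹*c) := by rw [← hinv₁ a, ← hinv₁ c]
        _ = ((a*a⁻¹)*(c*c⁻¹))*(a*c) := med (a*a⁻¹) a (c*c⁻¹) c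
    have hcfull : (a*c)*(a⁻¹*c⁻¹) = (a⁻¹*c⁻¹)*(a*c) := by
      rw [h1, h2, hcomm a, hcomm c]
    have hp := pair (a*c) (a⁻¹*c⁻¹) hu hcfull
    rw [hp, h2]
  -- equal rsets give equal idempotents
  have eEq : ∀ a b : G, rset a = rset b → a⁻¹*a = b⁻¹*b := by
    intro a b hab
    have hm : ∀ x y : G, rset x = rset y → (y⁻¹*y)*(x⁻¹*x) = x⁻¹*x := by
      intro x y hxy
      have hmem : (x⁻¹*x) ∈ rset y := by
        rw [← hxy]
        exact ⟨x⁻¹, (hcomm x).symm⟩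
      rw [rchar y] at hmem
      exact hmem
    have h1 := hm a b hab
    have h2 := hm b a hab.symm
    calc a⁻¹*a = (b⁻¹*b)*(a⁻¹*a) := h1.symm
      _ = ((b⁻¹*b)*(b⁻¹*b))*(a⁻¹*a) := by rw [idem b]
      _ = ((a⁻¹*a)*(b⁻¹*b))*(b⁻¹*b) := hAG (b⁻¹*b) (b⁻¹*b) (a⁻¹*a)
      _ = (b⁻¹*b)*(b⁻¹*b) := by rw [h2]
      _ = b⁻¹*b := idem b
  have sqset : ∀ a : G, rset (a*a) = rset a := by
    intro a
    rw [prodchar a a, idem a, rchar a]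
  have sqcomm : ∀ a b : G, (a*b)*(a*b) = (b*a)*(b*a) := by
    intro a b
    calc (a*b)*(a*b) = (a*a)*(b*b) := med a b a b
      _ = b*((a*a)*b) := hss (a*a) b b
      _ = b*((b*a)*a) := by rw [hAG a a b]
      _ = (b*a)*(b*a) := hss b (b*a) a
  have mem_self : ∀ a : G, a ∈ rset a := by
    intro a
    rw [rchar a]
    show (a⁻¹*a)*a = a
    rw [← hcomm a]
    exact (hinv₁ a).symm
  refine ⟨{ r := fun a b => rset a = rset b,
            iseqv := ⟨fun _ => rfl, Eq.symm, Eq.trans⟩,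
            mul' := ?_ }, ?_, ?_, ?_, ?_⟩
  · intro w x y z h1 h2
    show rset (w*y) = rset (x*z)
    rw [prodchar w y, prodchar x z, eEq w x h1, eEq y z h2]
  · intro a b
    exact Iff.rfl
  · intro a
    show rset a = rset (a*a)
    exact (sqset a).symm
  · intro a b
    show rset (a*b) = rset (b*a)
    rw [← sqset (a*b), ← sqset (b*a), sqcomm a b]
  · intro ρ hρ1 hρ2 a b hab
    have hab' : rset a = rset b := hab
    obtain ⟨x, hx⟩ : a ∈ rset b := hab' ▸ mem_self a
    obtain ⟨y, hy⟩ : b ∈ rset a := hab' ▸ mem_self b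
    have key : ∀ c d w : G, c = d * w → ρ c (d * c) := by
      intro c d w hcd
      have s1 : ρ c ((d*d)*w) := by
        rw [hcd]
        exact ρ.mul (hρ1 d) (ρ.refl w)
      have s3 : ρ ((d*d)*w) (d*(w*d)) := by
        rw [hAG d d w]
        exact hρ2 (w*d) d
      have s4 : ρ (d*(w*d)) (d*(d*w)) := ρ.mul (ρ.refl d) (hρ2 w d)
      have s5 : ρ c (d*(d*w)) := ρ.trans (ρ.trans s1 s3) s4
      have hdc : d*c = d*(d*w) := by rw [hcd]
      rw [hdc]
      exact s5
    have k1 : ρ a (b*a) := key a b x hx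
    have k2 : ρ b (a*b) := key b a y hy
    exact ρ.trans (ρ.trans k1 (hρ2 b a)) (ρ.symm k2)
end

section
/- In a completely inverse AG**-groupoid A, the Green's relation H defined by a H b iff aA = bA is the maximum idempotent-separating congruence on A: H is a congruence, any two idempotents related by H are equal, and every idempotent-separating congruence on A is contained in H. -/
/-- Medial law in AG-groupoids. -/
lemma AG_medial {G : Type*} [Mul G] (hAG : ∀ x y z : G, x * y * z = z * y * x)
    (a b c d : G) : (a * b) * (c * d) = (a * c) * (b * d) := by
  rw [hAG a b (c * d), hAG c d b, hAG (b * d) c a]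

/-- Paramedial-type law in AG**-groupoids. -/
lemma AG_paramedial {G : Type*} [Mul G]
    (hAG : ∀ x y z : G, x * y * z = z * y * x)
    (hss : ∀ x y z : G, x * (y * z) = y * (x * z))
    (a b c d : G) : (a * b) * (c * d) = (d * b) * (c * a) := by
  rw [hss (a * b) c d, hAG a b d, hss c (d * b) a]

/-- Uniqueness of completely inverse elements in AG**-groupoids. -/
lemma AG_inv_unique {G : Type*} [Mul G]
    (hAG : ∀ x y z : G, x * y * z = z * y * x)
    (hss : ∀ x y z : G, x * (y * z) = y * (x * z))
    (a x y : G)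
    (h1 : a = a * x * a) (h2 : x = x * a * x) (h3 : a * x = x * a)
    (h4 : a = a * y * a) (h5 : y = y * a * y) (h6 : a * y = y * a) :
    x = y := by
  have hx : (x * x) * a = x := by rw [hAG x x a, h3, ← h2]
  have hy : (y * y) * a = y := by rw [hAG y y a, h6, ← h5]
  have h7 : (a * y) * x = x := by
    conv_lhs => rw [← hx]
    rw [hss (a * y) (x * x) a, ← h4]
    exact hx
  have h8 : (a * x) * y = y := by
    conv_lhs => rw [← hy]
    rw [hss (a * x) (y * y) a, ← h1]
    exact hy
  calc x = (a * y) * x := h7.symm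
    _ = (y * a) * x := by rw [h6]
    _ = (x * a) * y := hAG y a x
    _ = (a * x) * y := by rw [h3]
    _ = y := h8

/-- `a * x` is idempotent for an inverse pair `(a, x)`. -/
lemma AG_pair_idem {G : Type*} [Mul G]
    (hAG : ∀ x y z : G, x * y * z = z * y * x)
    {a x : G} (h2 : x = x * a * x) (h3 : a * x = x * a) :
    (a * x) * (a * x) = a * x := by
  rw [hAG a x (a * x), h3, ← h2]

/-- In a completely inverse AG**-groupoid, Green's relation `H`
(`a H b ↔ aA = bA`) is the maximum idempotent-separating congruence. -/
theorem H_max_idempotent_separating {G : Type*} [Mul G] [Inv G]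
    (hAG : ∀ x y z : G, x * y * z = z * y * x)
    (hss : ∀ x y z : G, x * (y * z) = y * (x * z))
    (hinv₁ : ∀ a : G, a = a * a⁻¹ * a)
    (hinv₂ : ∀ a : G, a⁻¹ = a⁻¹ * a * a⁻¹)
    (hcomm : ∀ a : G, a * a⁻¹ = a⁻¹ * a) :
    ∃ H : Con G,
      (∀ a b : G, H a b ↔ rset a = rset b) ∧
      (∀ e f : G, e * e = e → f * f = f → H e f → e = f) ∧
      (∀ ρ : Con G, (∀ e f : G, e * e = e → f * f = f → ρ e f → e = f) →
        ρ ≤ H) := by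
  have medial := AG_medial hAG
  have paramedial := AG_paramedial hAG hss
  -- a*a⁻¹ is idempotent
  have e_idem : ∀ a : G, (a * a⁻¹) * (a * a⁻¹) = a * a⁻¹ :=
    fun a => AG_pair_idem hAG (hinv₂ a) (hcomm a)
  -- idempotents are their own inverses
  have idem_inv : ∀ e : G, e * e = e → e⁻¹ = e := fun e he =>
    AG_inv_unique hAG hss e e⁻¹ e (hinv₁ e) (hinv₂ e) (hcomm e)
      (by rw [he, he]) (by rw [he, he]) rfl
  -- idempotents commute
  have idem_comm : ∀ e f : G, e * e = e → f * f = f → e * f = f * e := by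
    intro e f he hf
    calc e * f = (e * e) * (f * f) := by rw [he, hf]
      _ = (f * e) * (f * e) := paramedial e e f f
      _ = (f * f) * (e * e) := medial f e f e
      _ = f * e := by rw [he, hf]
  -- the key identity (xy)(xy)⁻¹ = (xx⁻¹)(yy⁻¹)
  have star : ∀ x y : G, (x * y) * (x * y)⁻¹ = (x * x⁻¹) * (y * y⁻¹) := by
    intro x y
    have h4' : x * y = (x * y) * (x⁻¹ * y⁻¹) * (x * y) := by
      rw [medial x y x⁻¹ y⁻¹, medial (x * x⁻¹) (y * y⁻¹) x y,
        ← hinv₁ x, ← hinv₁ y]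
    have h5' : x⁻¹ * y⁻¹ = (x⁻¹ * y⁻¹) * (x * y) * (x⁻¹ * y⁻¹) := by
      rw [medial x⁻¹ y⁻¹ x y, medial (x⁻¹ * x) (y⁻¹ * y) x⁻¹ y⁻¹,
        ← hinv₂ x, ← hinv₂ y]
    have h6' : (x * y) * (x⁻¹ * y⁻¹) = (x⁻¹ * y⁻¹) * (x * y) := by
      rw [medial x y x⁻¹ y⁻¹, medial x⁻¹ y⁻¹ x y, hcomm x, hcomm y]
    have hp : (x * y)⁻¹ = x⁻¹ * y⁻¹ :=
      AG_inv_unique hAG hss (x * y) (x * y)⁻¹ (x⁻¹ * y⁻¹)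
        (hinv₁ (x * y)) (hinv₂ (x * y)) (hcomm (x * y)) h4' h5' h6'
    rw [hp, medial x y x⁻¹ y⁻¹]
  -- if aa⁻¹ = bb⁻¹ then bA ⊆ aA
  have subset : ∀ a b : G, a * a⁻¹ = b * b⁻¹ → rset b ⊆ rset a := by
    intro a b h x hx
    obtain ⟨c, hc⟩ := hx
    refine ⟨(a⁻¹ * b) * c, ?_⟩
    rw [hc]
    calc b * c = ((b * b⁻¹) * b) * c := by rw [← hinv₁ b]
      _ = ((a * a⁻¹) * b) * c := by rw [h]
      _ = (c * b) * (a * a⁻¹) := hAG (a * a⁻¹) b c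
      _ = (a⁻¹ * b) * (a * c) := paramedial c b a a⁻¹
      _ = a * ((a⁻¹ * b) * c) := hss (a⁻¹ * b) a c
  -- rset b = rset (bb⁻¹)
  have rset_e : ∀ b : G, rset b = rset (b * b⁻¹) := by
    intro b
    have hf := e_idem b
    have hfi := idem_inv _ hf
    have h1 : (b * b⁻¹) * (b * b⁻¹)⁻¹ = b * b⁻¹ := by rw [hfi, hf]
    exact Set.Subset.antisymm (subset (b * b⁻¹) b h1) (subset b (b * b⁻¹) h1.symm)
  -- absorption for idempotents
  have absorb : ∀ f d : G, f * f = f → f * (f * d) = f * d := by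
    intro f d hf
    calc f * (f * d) = (f * f) * (f * d) := by rw [hf]
      _ = (d * f) * (f * f) := paramedial f f f d
      _ = (d * f) * f := by rw [hf]
      _ = (f * f) * d := hAG d f f
      _ = f * d := by rw [hf]
  -- half of the idempotent comparison
  have half : ∀ e f : G, e * e = e → f * f = f → rset e = rset f → f * e = e := by
    intro e f he hf hset
    have h1 : e ∈ rset f := by rw [← hset]; exact ⟨e, he.symm⟩
    obtain ⟨c, hc⟩ := h1
    have he2 : e = f * (c * c) := by
      calc e = e * e := he.symm
        _ = (f * c) * (f * c) := by rw [hc]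
        _ = (f * f) * (c * c) := medial f c f c
        _ = f * (c * c) := by rw [hf]
    rw [he2]
    exact absorb f (c * c) hf
  -- idempotents with the same rset are equal
  have eq_of_rset : ∀ e f : G, e * e = e → f * f = f → rset e = rset f → e = f := by
    intro e f he hf hset
    have h1 := half e f he hf hset
    have h2 := half f e hf he hset.symm
    calc e = f * e := h1.symm
      _ = e * f := (idem_comm e f he hf).symm
      _ = f := h2
  -- key equivalence
  have keyeq : ∀ a b : G, rset a = rset b ↔ a * a⁻¹ = b * b⁻¹ := by
    intro a b
    constructor
    · intro h
      apply eq_of_rset (a * a⁻¹) (b * b⁻¹) (e_idem a) (e_idem b)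
      rw [← rset_e a, ← rset_e b]; exact h
    · intro h
      rw [rset_e a, rset_e b, h]
  refine ⟨{ r := fun a b => rset a = rset b,
            iseqv := ⟨fun _ => rfl, Eq.symm, Eq.trans⟩,
            mul' := fun {w x y z} h1 h2 => (keyeq _ _).mpr (by
              rw [star w y, star x z, (keyeq w x).mp h1, (keyeq y z).mp h2]) },
         fun a b => Iff.rfl, ?_, ?_⟩
  · -- idempotent separating
    intro e f he hf hH
    exact eq_of_rset e f he hf hH
  · -- maximality
    intro ρ hsep x y hxy
    show rset x = rset y
    -- laws in the quotient
    have hAGQ : ∀ p q r : ρ.Quotient, p * q * r = r * q * p := by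
      intro p q r
      refine Con.induction_on p fun a => ?_
      refine Con.induction_on q fun b => ?_
      refine Con.induction_on r fun c => ?_
      simp only [← Con.coe_mul]
      rw [hAG a b c]
    have hssQ : ∀ p q r : ρ.Quotient, p * (q * r) = q * (p * r) := by
      intro p q r
      refine Con.induction_on p fun a => ?_
      refine Con.induction_on q fun b => ?_
      refine Con.induction_on r fun c => ?_
      simp only [← Con.coe_mul]
      rw [hss a b c]
    have hxyQ : ((x : G) : ρ.Quotient) = ((y : G) : ρ.Quotient) := (Con.eq ρ).mpr hxy
    have hq : ((x⁻¹ : G) : ρ.Quotient) = ((y⁻¹ : G) : ρ.Quotient) := by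
      refine AG_inv_unique hAGQ hssQ ((x : G) : ρ.Quotient) _ _ ?_ ?_ ?_ ?_ ?_ ?_
      · simp only [← Con.coe_mul]; exact congrArg _ (hinv₁ x)
      · simp only [← Con.coe_mul]; exact congrArg _ (hinv₂ x)
      · simp only [← Con.coe_mul]; exact congrArg _ (hcomm x)
      · rw [hxyQ]; simp only [← Con.coe_mul]; exact congrArg _ (hinv₁ y)
      · rw [hxyQ]; simp only [← Con.coe_mul]; exact congrArg _ (hinv₂ y)
      · rw [hxyQ]; simp only [← Con.coe_mul]; exact congrArg _ (hcomm y)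
    have hinvρ : ρ x⁻¹ y⁻¹ := (Con.eq ρ).mp hq
    have hee : ρ (x * x⁻¹) (y * y⁻¹) := ρ.mul hxy hinvρ
    exact (keyeq x y).mpr (hsep _ _ (e_idem x) (e_idem y) hee)
end

section
/- In a completely inverse AG**-groupoid A, for every idempotent e, the H-class H_e = {a ∈ A : aA = eA} is an AG-group with left identity e: for every a with aA = eA one has ea = a, aa⁻¹ = a⁻¹a = e, and a⁻¹A = eA. -/
/-- In a completely inverse AG**-groupoid, for every idempotent `e` the
`H`-class `H_e = {a : aA = eA}` is an AG-group with left identity `e`: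
for every `a` with `aA = eA` we have `ea = a`, `aa⁻¹ = a⁻¹a = e`, and
`a⁻¹A = eA` (so the inverse of `a` lies in `H_e`). -/
theorem H_class_is_AG_group {G : Type*} [Mul G] [Inv G]
    (hAG : ∀ x y z : G, x * y * z = z * y * x)
    (hss : ∀ x y z : G, x * (y * z) = y * (x * z))
    (hinv₁ : ∀ a : G, a = a * a⁻¹ * a)
    (hinv₂ : ∀ a : G, a⁻¹ = a⁻¹ * a * a⁻¹)
    (hcomm : ∀ a : G, a * a⁻¹ = a⁻¹ * a)
    (e : G) (he : e * e = e) :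
    ∀ a : G, rset a = rset e →
      e * a = a ∧ a * a⁻¹ = e ∧ a⁻¹ * a = e ∧ rset a⁻¹ = rset e := by
  -- medial law, valid in any AG-groupoid
  have medial : ∀ x y z w : G, (x * y) * (z * w) = (x * z) * (y * w) := by
    intro x y z w
    calc (x * y) * (z * w) = ((z * w) * y) * x := hAG x y (z * w)
      _ = ((y * w) * z) * x := by rw [hAG z w y]
      _ = (x * z) * (y * w) := hAG (y * w) z x
  -- an idempotent acts as left identity on its own left products
  have idemL : ∀ f : G, f * f = f → ∀ x : G, f * (f * x) = f * x := by
    intro f hf x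
    have h1 : f * x = (x * f) * f := by rw [hAG x f f, hf]
    calc f * (f * x) = f * ((x * f) * f) := by rw [← h1]
      _ = (x * f) * (f * f) := hss f (x * f) f
      _ = (x * f) * f := by rw [hf]
      _ = f * x := h1.symm
  intro a ha
  -- aa⁻¹ is idempotent
  have hfid : (a * a⁻¹) * (a * a⁻¹) = a * a⁻¹ := by
    have h : (a * a⁻¹ * a) * a⁻¹ = (a⁻¹ * a) * (a * a⁻¹) := hAG (a * a⁻¹) a a⁻¹
    rw [← hinv₁ a] at h
    calc (a * a⁻¹) * (a * a⁻¹) = (a⁻¹ * a) * (a * a⁻¹) := by rw [hcomm a]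
      _ = a * a⁻¹ := h.symm
  -- every left product of a is fixed by left multiplication by aa⁻¹
  have fixa : ∀ b : G, a * b = (a * a⁻¹) * (a * b) := by
    intro b
    calc a * b = ((a * a⁻¹) * a) * b := by rw [← hinv₁ a]
      _ = ((a⁻¹ * a) * a) * b := by rw [hcomm a]
      _ = ((a * a) * a⁻¹) * b := by rw [hAG a a a⁻¹]
      _ = (b * a⁻¹) * (a * a) := (hAG b a⁻¹ (a * a)).symm
      _ = a * ((b * a⁻¹) * a) := (hss a (b * a⁻¹) a).symm
      _ = a * ((a * a⁻¹) * b) := by rw [hAG a a⁻¹ b]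
      _ = (a * a⁻¹) * (a * b) := (hss (a * a⁻¹) a b).symm
  obtain ⟨z, hz⟩ : a * a⁻¹ ∈ rset e := by rw [← ha]; exact ⟨a⁻¹, rfl⟩
  obtain ⟨u, hu⟩ : e ∈ rset a := by rw [ha]; exact ⟨e, he.symm⟩
  have hef : e * (a * a⁻¹) = a * a⁻¹ := by rw [hz]; exact idemL e he z
  have hfe : (a * a⁻¹) * e = e := by rw [hu]; exact (fixa u).symm
  have hfeq : a * a⁻¹ = e := by
    have h : e * (a * a⁻¹) = e := by
      calc e * (a * a⁻¹) = (e * e) * (a * a⁻¹) := by rw [he]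
        _ = ((a * a⁻¹) * e) * e := hAG e e (a * a⁻¹)
        _ = e * e := by rw [hfe]
        _ = e := he
    exact hef.symm.trans h
  have hia : a⁻¹ * a = e := (hcomm a).symm.trans hfeq
  refine ⟨?_, hfeq, hia, ?_⟩
  · rw [← hfeq]; exact (hinv₁ a).symm
  · ext x
    constructor
    · rintro ⟨b, rfl⟩
      refine ⟨a⁻¹ * b, ?_⟩
      calc a⁻¹ * b = ((a⁻¹ * a) * a⁻¹) * b := by rw [← hinv₂ a]
        _ = (e * a⁻¹) * b := by rw [hia]
        _ = (b * a⁻¹) * e := (hAG b a⁻¹ e).symm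
        _ = (b * a⁻¹) * (a⁻¹ * a) := by rw [hia]
        _ = a⁻¹ * ((b * a⁻¹) * a) := (hss a⁻¹ (b * a⁻¹) a).symm
        _ = a⁻¹ * ((a * a⁻¹) * b) := by rw [hAG a a⁻¹ b]
        _ = a⁻¹ * (e * b) := by rw [hfeq]
        _ = e * (a⁻¹ * b) := (hss e a⁻¹ b).symm
    · rintro ⟨c, rfl⟩
      refine ⟨(a * e) * c, ?_⟩
      calc e * c = e * (e * c) := (idemL e he c).symm
        _ = (a * a⁻¹) * (e * c) := by rw [hfeq]
        _ = (a * e) * (a⁻¹ * c) := medial a a⁻¹ e c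
        _ = a⁻¹ * ((a * e) * c) := hss (a * e) a⁻¹ c
end

section
/- Let A be a completely inverse AG**-groupoid and let e be an idempotent that is a zero of the semilattice of idempotents (ef = e = fe for every idempotent f). Then eA equals the H-class H_e = {a ∈ A : aA = eA}, eA is an ideal of A contained in every ideal of A (the kernel of A), and the map φ : A → eA given by φ(a) = ea is a surjective homomorphism satisfying φ(x) = x for all x ∈ eA. -/
/-- If `e` is a zero of the semilattice of idempotents of a completely inverse
AG**-groupoid `A`, then `eA` is the `H`-class of `e`, `eA` is the kernel of
`A` (an ideal contained in every ideal), and `φ(a) = ea` is a surjective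
homomorphism of `A` onto `eA` fixing `eA` pointwise. -/
theorem kernel_theorem {G : Type*} [Mul G] [Inv G]
    (hAG : ∀ x y z : G, x * y * z = z * y * x)
    (hss : ∀ x y z : G, x * (y * z) = y * (x * z))
    (hinv₁ : ∀ a : G, a = a * a⁻¹ * a)
    (hinv₂ : ∀ a : G, a⁻¹ = a⁻¹ * a * a⁻¹)
    (hcomm : ∀ a : G, a * a⁻¹ = a⁻¹ * a)
    (e : G) (he : e * e = e)
    (hzero : ∀ f : G, f * f = f → e * f = e ∧ f * e = e) :
    rset e = {a : G | rset a = rset e} ∧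
    IsLeftIdeal (rset e) ∧ IsRightIdeal (rset e) ∧
    (∀ I : Set G, IsLeftIdeal I → IsRightIdeal I → rset e ⊆ I) ∧
    (∀ a b : G, e * (a * b) = (e * a) * (e * b)) ∧
    Set.range (fun a : G => e * a) = rset e ∧
    (∀ x ∈ rset e, e * x = x) := by
  -- medial law
  have med : ∀ a b c d : G, (a * b) * (c * d) = (a * c) * (b * d) := by
    intro a b c d
    calc (a * b) * (c * d) = (c * d * b) * a := hAG a b (c * d)
      _ = (b * d * c) * a := by rw [hAG c d b]
      _ = a * c * (b * d) := hAG (b * d) c a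
  -- paramedial law
  have par : ∀ a b c d : G, (a * b) * (c * d) = (d * b) * (c * a) := by
    intro a b c d
    calc (a * b) * (c * d) = c * ((a * b) * d) := hss (a * b) c d
      _ = c * ((d * b) * a) := by rw [hAG a b d]
      _ = (d * b) * (c * a) := hss c (d * b) a
  -- a * a⁻¹ is idempotent
  have fidem : ∀ a : G, (a * a⁻¹) * (a * a⁻¹) = a * a⁻¹ := by
    intro a
    calc (a * a⁻¹) * (a * a⁻¹) = a * ((a * a⁻¹) * a⁻¹) := hss (a * a⁻¹) a a⁻¹
      _ = a * ((a⁻¹ * a) * a⁻¹) := by rw [hcomm a]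
      _ = a * a⁻¹ := by rw [← hinv₂ a]
  -- e * (e * x) = e * x
  have key6 : ∀ x : G, e * (e * x) = e * x := by
    intro x
    calc e * (e * x) = (e * e) * (e * x) := by rw [he]
      _ = (x * e) * (e * e) := par e e e x
      _ = (x * e) * e := by rw [he]
      _ = (e * e) * x := hAG x e e
      _ = e * x := by rw [he]
  -- φ is a homomorphism
  have hom : ∀ a b : G, e * (a * b) = (e * a) * (e * b) := by
    intro a b
    calc e * (a * b) = (e * e) * (a * b) := by rw [he]
      _ = (e * a) * (e * b) := med e e a b
  -- right multiplication: (e*b)*x = e*(b*x)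
  have rmul : ∀ b x : G, (e * b) * x = e * (b * x) := by
    intro b x
    calc (e * b) * x = (x * b) * e := hAG e b x
      _ = (x * b) * (e * e) := by rw [he]
      _ = (e * b) * (e * x) := par x b e e
      _ = e * (b * x) := (hom b x).symm
  -- if a ∈ eA then a*a⁻¹ = e
  have kinv : ∀ a : G, (∃ b, a = e * b) → a * a⁻¹ = e := by
    rintro a ⟨b, rfl⟩
    have h1 : (e * b) * (e * b)⁻¹ = e * (b * (e * b)⁻¹) := rmul b (e * b)⁻¹
    have h2 : e * ((e * b) * (e * b)⁻¹) = (e * b) * (e * b)⁻¹ := by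
      rw [h1, key6]
    have h3 : e * ((e * b) * (e * b)⁻¹) = e := (hzero _ (fidem (e * b))).1
    rw [← h2, h3]
  -- the key surjectivity identity: a * ((w*e)*a⁻¹) = e*w whenever a*a⁻¹ = e
  have W : ∀ a w : G, a * a⁻¹ = e → a * ((w * e) * a⁻¹) = e * w := by
    intro a w h
    calc a * ((w * e) * a⁻¹) = (w * e) * (a * a⁻¹) := hss a (w * e) a⁻¹
      _ = (w * e) * e := by rw [h]
      _ = (e * e) * w := hAG w e e
      _ = e * w := by rw [he]
  refine ⟨?_, ?_, ?_, ?_, hom, ?_, ?_⟩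
  · -- rset e = H_e
    ext a
    constructor
    · rintro ⟨b, rfl⟩
      have hk : (e * b) * (e * b)⁻¹ = e := kinv (e * b) ⟨b, rfl⟩
      show rset (e * b) = rset e
      ext x
      constructor
      · rintro ⟨c, rfl⟩
        exact ⟨b * c, rmul b c⟩
      · rintro ⟨c, rfl⟩
        exact ⟨(c * e) * (e * b)⁻¹, (W (e * b) c hk).symm⟩
    · intro ha
      have h1 : a * a⁻¹ ∈ rset a := ⟨a⁻¹, rfl⟩
      rw [Set.mem_setOf_eq] at ha
      rw [ha] at h1
      obtain ⟨c, hc⟩ := h1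
      have h2 : e * (a * a⁻¹) = a * a⁻¹ := by rw [hc, key6]
      have h3 : e * (a * a⁻¹) = e := (hzero _ (fidem a)).1
      have h4 : a * a⁻¹ = e := by rw [← h2, h3]
      exact ⟨a, by rw [← h4, ← hinv₁ a]⟩
  · -- left ideal
    refine ⟨⟨e, e, he.symm⟩, ?_⟩
    rintro x b ⟨c, rfl⟩
    exact ⟨x * c, hss x e c⟩
  · -- right ideal
    refine ⟨⟨e, e, he.symm⟩, ?_⟩
    rintro x b ⟨c, rfl⟩
    exact ⟨c * x, rmul c x⟩
  · -- kernel: contained in every ideal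
    rintro I hL hR x ⟨b, rfl⟩
    obtain ⟨c, hc⟩ := hL.1
    have key : e * b = c * ((c⁻¹ * e) * b) := by
      have hz : (c * c⁻¹) * e = e := (hzero _ (fidem c)).2
      calc e * b = ((c * c⁻¹) * e) * b := by rw [hz]
        _ = (b * e) * (c * c⁻¹) := hAG (c * c⁻¹) e b
        _ = (c⁻¹ * e) * (c * b) := par b e c c⁻¹
        _ = c * ((c⁻¹ * e) * b) := (hss c (c⁻¹ * e) b).symm
    rw [key]
    exact hR.2 _ c hc
  · -- range equals rset e
    ext x
    constructor
    · rintro ⟨a, rfl⟩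
      exact ⟨a, rfl⟩
    · rintro ⟨b, rfl⟩
      exact ⟨b, rfl⟩
  · -- e fixes rset e pointwise
    rintro x ⟨b, rfl⟩
    exact key6 b
end

section
/- Let A be a completely inverse AG**-groupoid and let e be an idempotent that is a zero of the semilattice of idempotents (ef = e = fe for every idempotent f). Then the relation σ = {(a,b) ∈ A × A : ea = eb} is the least AG-group congruence on A: σ is a congruence, the quotient A/σ is an AG-group, and σ is contained in every congruence ρ on A for which A/ρ is an AG-group. -/
/-- A multiplicative structure is an AG-group if it satisfies the left
invertive law and has a left identity relative to which every element has a
left inverse. -/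
def IsAGGroup (G : Type*) [Mul G] : Prop :=
  (∀ x y z : G, x * y * z = z * y * x) ∧
  ∃ e : G, (∀ x : G, e * x = x) ∧ ∀ a : G, ∃ a' : G, a' * a = e

/-- If `e` is a zero of the semilattice of idempotents of a completely inverse
AG**-groupoid `A`, then `σ = {(a,b) : ea = eb}` is the least AG-group
congruence on `A`. -/
theorem least_AG_group_congruence {G : Type*} [Mul G] [Inv G]
    (hAG : ∀ x y z : G, x * y * z = z * y * x)
    (hss : ∀ x y z : G, x * (y * z) = y * (x * z))
    (hinv₁ : ∀ a : G, a = a * a⁻¹ * a)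
    (hinv₂ : ∀ a : G, a⁻¹ = a⁻¹ * a * a⁻¹)
    (hcomm : ∀ a : G, a * a⁻¹ = a⁻¹ * a)
    (e : G) (he : e * e = e)
    (hzero : ∀ f : G, f * f = f → e * f = e ∧ f * e = e) :
    ∃ σ : Con G,
      (∀ a b : G, σ a b ↔ e * a = e * b) ∧
      IsAGGroup σ.Quotient ∧
      ∀ ρ : Con G, IsAGGroup ρ.Quotient → σ ≤ ρ := by
  -- medial law
  have medial : ∀ a b c d : G, (a * b) * (c * d) = (a * c) * (b * d) := by
    intro a b c d
    rw [hAG a b (c * d), hAG c d b, hAG (b * d) c a]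
  -- paramedial law
  have paramedial : ∀ a b c d : G, (a * b) * (c * d) = (d * b) * (c * a) := by
    intro a b c d
    rw [hss (a * b) c d, hAG a b d, hss c (d * b) a]
  -- e (e x) = e x
  have heabs : ∀ x : G, e * (e * x) = e * x := by
    intro x
    calc e * (e * x) = (e * e) * (e * x) := by rw [he]
      _ = (x * e) * (e * e) := paramedial e e e x
      _ = (x * e) * e := by rw [he]
      _ = (e * e) * x := hAG x e e
      _ = e * x := by rw [he]
  -- a⁻¹ a is idempotent
  have hidem : ∀ a : G, (a⁻¹ * a) * (a⁻¹ * a) = a⁻¹ * a := by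
    intro a
    calc (a⁻¹ * a) * (a⁻¹ * a) = (a * a⁻¹) * (a⁻¹ * a) := by rw [hcomm]
      _ = a⁻¹ * ((a * a⁻¹) * a) := hss (a * a⁻¹) a⁻¹ a
      _ = a⁻¹ * a := by rw [← hinv₁ a]
  set σ : Con G :=
    ⟨⟨fun a b => e * a = e * b,
      ⟨fun _ => rfl, Eq.symm, Eq.trans⟩⟩,
      fun {w x y z} h1 h2 => by
        show e * (w * y) = e * (x * z)
        calc e * (w * y) = (e * e) * (w * y) := by rw [he]
          _ = (e * w) * (e * y) := medial e e w y
          _ = (e * x) * (e * z) := by rw [h1, h2]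
          _ = (e * e) * (x * z) := (medial e e x z).symm
          _ = e * (x * z) := by rw [he]⟩ with hσ
  have hσr : ∀ a b : G, σ a b ↔ e * a = e * b := fun a b => Iff.rfl
  refine ⟨σ, hσr, ⟨?_, (e : σ.Quotient), ?_, ?_⟩, ?_⟩
  · -- left invertive law on quotient
    intro x y z
    refine Quotient.inductionOn₃ x y z (fun a b c => ?_)
    show (↑(a * b * c) : σ.Quotient) = ↑(c * b * a)
    exact congrArg _ (hAG a b c)
  · -- left identity
    intro x
    refine Quotient.inductionOn x (fun a => ?_)
    show (↑(e * a) : σ.Quotient) = ↑a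
    exact (σ.eq).mpr (heabs a)
  · -- left inverses
    intro x
    refine Quotient.inductionOn x (fun a => ?_)
    refine ⟨↑a⁻¹, ?_⟩
    show (↑(a⁻¹ * a) : σ.Quotient) = ↑e
    refine (σ.eq).mpr ?_
    show e * (a⁻¹ * a) = e * e
    rw [he, (hzero _ (hidem a)).1]
  · -- least
    rintro ρ ⟨hρAG, u, hu_id, hu_inv⟩ a b (hab : e * a = e * b)
    -- [e] is idempotent in the quotient, hence equals u
    have heq : (↑e : ρ.Quotient) = u := by
      obtain ⟨x', hx'⟩ := hu_inv (↑e : ρ.Quotient)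
      have hee : (↑e : ρ.Quotient) * ↑e = ↑e := by
        rw [← Con.coe_mul, he]
      calc (↑e : ρ.Quotient) = u * ↑e := (hu_id _).symm
        _ = (x' * ↑e) * ↑e := by rw [hx']
        _ = (↑e * ↑e) * x' := hρAG x' _ _
        _ = ↑e * x' := by rw [hee]
        _ = (u * ↑e) * x' := by rw [hu_id]
        _ = (x' * ↑e) * u := hρAG u _ x'
        _ = u * u := by rw [hx']
        _ = u := hu_id u
    have h2 : (↑(e * a) : ρ.Quotient) = ↑(e * b) := by rw [hab]
    rw [Con.coe_mul, Con.coe_mul, heq, hu_id, hu_id] at h2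
    exact (ρ.eq).mp h2
end
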